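/- The polynomial p(a) = 729*a^20 - 2214*a^18 - 315*a^16 - 2568*a^14 - 2206*a^12 - 1188*a^10 - 2206*a^8 - 2568*a^6 - 315*a^4 - 2214*a^2 + 729 has exactly one real root in the interval (1, infinity), and this root lies in the interval (1.87, 1.88). -/

import Mathlib

/-!
Since `p` is even, `p a = q (a ^ 2)` for a polynomial `q` of degree 10. On `(1, 1.87 ^ 2]` the
polynomial `q` is negative, and on `[1.87 ^ 2, ∞)` its derivative is positive; as `q (1.88 ^ 2) > 0`,
`q` has exactly one zero beyond `1`, and it lies between `1.87 ^ 2` and `1.88 ^ 2`.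
-/

open Set

theorem existsUnique_root_of_neg_of_strictMonoOn {f : ℝ → ℝ} {c l r : ℝ} (hf : Continuous f)
    (hcl : c < l) (hlr : l ≤ r) (hneg : ∀ x, c < x → x ≤ l → f x < 0)
    (hmono : StrictMonoOn f (Ici l)) (hr : 0 < f r) :
    (∃! x, c < x ∧ f x = 0) ∧ ∀ x, c < x → f x = 0 → l < x ∧ x < r := by
  have hloc : ∀ x, c < x → f x = 0 → l < x ∧ x < r := by
    intro x hcx hx
    have hlx : l < x := not_le.mp fun hxl => (hneg x hcx hxl).ne hx
    refine ⟨hlx, not_le.mp fun hrx => ?_⟩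
    have : f r ≤ f x := hmono.monotoneOn hlr hlx.le hrx
    linarith
  obtain ⟨x, hx, hx0⟩ : ∃ x ∈ Ioo l r, f x = 0 :=
    intermediate_value_Ioo hlr hf.continuousOn ⟨hneg l hcl le_rfl, hr⟩
  refine ⟨⟨x, ⟨hcl.trans hx.1, hx0⟩, fun y ⟨hcy, hy0⟩ => ?_⟩, hloc⟩
  exact hmono.injOn (hloc y hcy hy0).1.le hx.1.le (hy0.trans hx0.symm)

-- `p a = tau2Poly (a ^ 2)`; the constant `3.4969` below is `1.87 ^ 2`.
def tau2Poly (x : ℝ) : ℝ :=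
  729 * x ^ 10 - 2214 * x ^ 9 - 315 * x ^ 8 - 2568 * x ^ 7 - 2206 * x ^ 6 - 1188 * x ^ 5
    - 2206 * x ^ 4 - 2568 * x ^ 3 - 315 * x ^ 2 - 2214 * x + 729

def tau2PolyDeriv (x : ℝ) : ℝ :=
  7290 * x ^ 9 - 19926 * x ^ 8 - 2520 * x ^ 7 - 17976 * x ^ 6 - 13236 * x ^ 5 - 5940 * x ^ 4
    - 8824 * x ^ 3 - 7704 * x ^ 2 - 630 * x - 2214

theorem hasDerivAt_tau2Poly (x : ℝ) : HasDerivAt tau2Poly (tau2PolyDeriv x) x := by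
  have h := (((((((((((hasDerivAt_pow 10 x).const_mul (729 : ℝ)).sub
    ((hasDerivAt_pow 9 x).const_mul 2214)).sub
    ((hasDerivAt_pow 8 x).const_mul 315)).sub
    ((hasDerivAt_pow 7 x).const_mul 2568)).sub
    ((hasDerivAt_pow 6 x).const_mul 2206)).sub
    ((hasDerivAt_pow 5 x).const_mul 1188)).sub
    ((hasDerivAt_pow 4 x).const_mul 2206)).sub
    ((hasDerivAt_pow 3 x).const_mul 2568)).sub
    ((hasDerivAt_pow 2 x).const_mul 315)).sub
    ((hasDerivAt_id' x).const_mul 2214)).add_const (729 : ℝ)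
  exact h.congr_deriv (by norm_num [tau2PolyDeriv]; ring)

theorem tau2Poly_neg {x : ℝ} (h1 : 1 < x) (h2 : x ≤ 3.4969) : tau2Poly x < 0 := by
  unfold tau2Poly
  have hx0 : (0 : ℝ) ≤ x := by linarith
  have hc : (0 : ℝ) ≤ 3.4969 - x := by linarith
  have hm : (0 : ℝ) ≤ x - 1 := by linarith
  nlinarith [mul_nonneg hc (pow_nonneg hx0 9), mul_nonneg hc (pow_nonneg hx0 8),
    mul_nonneg hc (pow_nonneg hx0 7), mul_nonneg hc (pow_nonneg hx0 6),
    mul_nonneg hm (pow_nonneg hx0 5), mul_nonneg hm (pow_nonneg hx0 4),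
    mul_nonneg hm (pow_nonneg hx0 3), mul_nonneg hm (pow_nonneg hx0 2),
    mul_nonneg hm hx0, hm, pow_nonneg hx0 5, pow_nonneg hx0 4, pow_nonneg hx0 3,
    pow_nonneg hx0 2]

theorem tau2PolyDeriv_pos {x : ℝ} (h : 3.4969 ≤ x) : 0 < tau2PolyDeriv x := by
  unfold tau2PolyDeriv
  have hx0 : (0 : ℝ) ≤ x := by linarith
  have hc : (0 : ℝ) ≤ x - 3.4969 := by linarith
  nlinarith [mul_nonneg hc (pow_nonneg hx0 8), mul_nonneg hc (pow_nonneg hx0 7),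
    mul_nonneg hc (pow_nonneg hx0 6), mul_nonneg hc (pow_nonneg hx0 5),
    mul_nonneg hc (pow_nonneg hx0 4), mul_nonneg hc (pow_nonneg hx0 3),
    mul_nonneg hc (pow_nonneg hx0 2), mul_nonneg hc hx0, hc]

theorem strictMonoOn_tau2Poly : StrictMonoOn tau2Poly (Ici 3.4969) :=
  strictMonoOn_of_hasDerivWithinAt_pos (convex_Ici _)
    (fun x _ => (hasDerivAt_tau2Poly x).continuousAt.continuousWithinAt)
    (fun x _ => (hasDerivAt_tau2Poly x).hasDerivWithinAt)
    (fun x hx => tau2PolyDeriv_pos (by rw [interior_Ici] at hx; exact le_of_lt hx))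

theorem tau2_polynomial_unique_root (p : ℝ → ℝ)
    (hp : ∀ a : ℝ, p a =
      729 * a ^ 20 - 2214 * a ^ 18 - 315 * a ^ 16 - 2568 * a ^ 14 - 2206 * a ^ 12
        - 1188 * a ^ 10 - 2206 * a ^ 8 - 2568 * a ^ 6 - 315 * a ^ 4 - 2214 * a ^ 2
        + 729) :
    (∃! a : ℝ, 1 < a ∧ p a = 0) ∧
    (∀ a : ℝ, 1 < a → p a = 0 → 1.87 < a ∧ a < 1.88) := by
  have hp_comp : p = tau2Poly ∘ (· ^ 2) := funext fun a => by
    simp only [hp, Function.comp, tau2Poly]; ring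
  have hsq : StrictMonoOn (fun a : ℝ => a ^ 2) (Ici 1.87) := fun a ha b _ hab =>
    pow_lt_pow_left₀ hab (by norm_num at ha; linarith) two_ne_zero
  have hmaps : MapsTo (fun a : ℝ => a ^ 2) (Ici 1.87) (Ici 3.4969) := fun a ha => by
    simp only [mem_Ici] at ha ⊢; nlinarith
  rw [hp_comp]
  refine existsUnique_root_of_neg_of_strictMonoOn (by unfold tau2Poly; fun_prop)
    (by norm_num) (by norm_num) (fun a h1 h2 => tau2Poly_neg ?_ ?_)
    (strictMonoOn_tau2Poly.comp hsq hmaps) (by norm_num [tau2Poly])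
  · exact one_lt_pow₀ h1 two_ne_zero
  · nlinarith
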